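/- arXiv:1312.3581 — 2 statements merged into one kernel-verified Lean document; each statement's English description precedes it below -/
import Mathlib

section
/- Let Δ, Λ₁, Λ₂ : ℝ⁴ → ℂ be C¹ with Δ vanishing nowhere. Then for every C² function f : ℝ⁴ → ℂ one has i·(L(L̄ f) − L̄(L f)) = (Υ₁/(Δ² Δ̄²)) f_{u₁} + (Υ₂/(Δ² Δ̄²)) f_{u₂}, where for j = 1, 2: Υ_j := i·( Δ·Δ·Δ̄·(Λ̄_j)_z + Δ·Δ̄·Λ₁·(Λ̄_j)_{u₁} + Δ·Δ̄·Λ₂·(Λ̄_j)_{u₂} − Δ·Δ·(Δ̄)_z·Λ̄_j − Δ·Λ₁·(Δ̄)_{u₁}·Λ̄_j − Δ·Λ₂·(Δ̄)_{u₂}·Λ̄_j − Δ·Δ̄·Δ̄·(Λ_j)_{z̄} − Δ·Δ̄·Λ̄₁·(Λ_j)_{u₁} − Δ·Δ̄·Λ̄₂·(Λ_j)_{u₂} + Δ̄·Δ̄·Δ_{z̄}·Λ_j + Δ̄·Λ̄₁·Δ_{u₁}·Λ_j + Δ̄·Λ̄₂·Δ_{u₂}·Λ_j ). (This is the paper's Lemma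 giving T = i[L, L̄] explicitly for General Class II.) -/
/-!
In the coordinate frame `L = ∑ⱼ aⱼ ∂ⱼ` with `a = (1/2, -i/2, Λ₁/Δ, Λ₂/Δ)` and `L̄ = ∑ⱼ āⱼ ∂ⱼ`.
For two first-order operators `X = ∑ aⱼ ∂ⱼ`, `Y = ∑ bⱼ ∂ⱼ` with differentiable coefficients the
second-order terms of `X (Y f) - Y (X f)` cancel by the symmetry of the second derivative of a
`C²` function, leaving `∑ⱼ (X bⱼ - Y aⱼ) ∂ⱼ f`. The constant coefficients contribute nothing, and
the quotient rule turns `i (L (Λ̄ⱼ/Δ̄) - L̄ (Λⱼ/Δ))` into `Υⱼ / (Δ² Δ̄²)`.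
-/

noncomputable section
open Complex ComplexConjugate

/-- Points of `ℝ⁴`, with coordinates `(x, y, u₁, u₂)` and `z = x + i y`. -/
abbrev V4 := Fin 4 → ℝ

/-- Partial derivative in the `j`-th coordinate direction. -/
def pd (j : Fin 4) (f : V4 → ℂ) : V4 → ℂ := fun p => fderiv ℝ f p (Pi.single j 1)

/-- Wirtinger derivative `f_z := (f_x − i f_y)/2`. -/
def wz (f : V4 → ℂ) : V4 → ℂ := fun p => (pd 0 f p - I * pd 1 f p) / 2

/-- Wirtinger derivative `f_z̄ := (f_x + i f_y)/2`. -/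
def wzb (f : V4 → ℂ) : V4 → ℂ := fun p => (pd 0 f p + I * pd 1 f p) / 2

/-- Partial derivative `f_{u₁}`. -/
def du1 (f : V4 → ℂ) : V4 → ℂ := pd 2 f

/-- Partial derivative `f_{u₂}`. -/
def du2 (f : V4 → ℂ) : V4 → ℂ := pd 3 f

variable (Δ Λ₁ Λ₂ : V4 → ℂ)

/-- The operator `L f := f_z + (Λ₁/Δ) f_{u₁} + (Λ₂/Δ) f_{u₂}`. -/
def Lop (f : V4 → ℂ) : V4 → ℂ := fun p =>
  wz f p + Λ₁ p / Δ p * du1 f p + Λ₂ p / Δ p * du2 f p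

/-- The conjugate operator `L̄ f := f_z̄ + (Λ̄₁/Δ̄) f_{u₁} + (Λ̄₂/Δ̄) f_{u₂}`. -/
def Lbop (f : V4 → ℂ) : V4 → ℂ := fun p =>
  wzb f p + conj (Λ₁ p) / conj (Δ p) * du1 f p + conj (Λ₂ p) / conj (Δ p) * du2 f p

/-- The numerator `Υ` associated to one of the `Λ` coefficients. -/
def Ups (Λ : V4 → ℂ) : V4 → ℂ := fun p =>
  I * (Δ p * Δ p * conj (Δ p) * wz (fun q => conj (Λ q)) p
      + Δ p * conj (Δ p) * Λ₁ p * du1 (fun q => conj (Λ q)) p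
      + Δ p * conj (Δ p) * Λ₂ p * du2 (fun q => conj (Λ q)) p
      - Δ p * Δ p * wz (fun q => conj (Δ q)) p * conj (Λ p)
      - Δ p * Λ₁ p * du1 (fun q => conj (Δ q)) p * conj (Λ p)
      - Δ p * Λ₂ p * du2 (fun q => conj (Δ q)) p * conj (Λ p)
      - Δ p * conj (Δ p) * conj (Δ p) * wzb Λ p
      - Δ p * conj (Δ p) * conj (Λ₁ p) * du1 Λ p
      - Δ p * conj (Δ p) * conj (Λ₂ p) * du2 Λ p
      + conj (Δ p) * conj (Δ p) * wzb Δ p * Λ p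
      + conj (Δ p) * conj (Λ₁ p) * du1 Δ p * Λ p
      + conj (Δ p) * conj (Λ₂ p) * du2 Δ p * Λ p)

open Finset

section FirstOrderOperator

variable {E ι : Type*} [NormedAddCommGroup E] [NormedSpace ℝ E] [Fintype ι]

def firstOrderOp (v : ι → E) (a : ι → E → ℂ) (f : E → ℂ) : E → ℂ :=
  fun p => ∑ i, a i p * fderiv ℝ f p (v i)

variable {v : ι → E} {a b : ι → E → ℂ} {f g h : E → ℂ} {p : E}

lemma firstOrderOp_div (hg : DifferentiableAt ℝ g p) (hh : DifferentiableAt ℝ h p)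
    (h0 : h p ≠ 0) :
    firstOrderOp v a (fun q => g q / h q) p
      = (h p * firstOrderOp v a g p - g p * firstOrderOp v a h p) / h p ^ 2 := by
  have hinv : HasFDerivAt (fun q => (h q)⁻¹) (-(h p ^ 2)⁻¹ • fderiv ℝ h p) p := by
    refine ((hasFDerivAt_inv' h0).comp p hh.hasFDerivAt).congr_fderiv ?_
    ext w
    simp only [ContinuousLinearMap.comp_apply, neg_apply,
      ContinuousLinearMap.mulLeftRight_apply, smul_apply, smul_eq_mul]
    ring
  have hdiv := (hg.hasFDerivAt.fun_mul hinv).fderiv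
  simp only [div_eq_mul_inv, firstOrderOp, hdiv]
  simp only [add_apply, smul_apply, smul_eq_mul, mul_sum, sum_mul, ← sum_sub_distrib]
  refine sum_congr rfl fun i _ => ?_
  field_simp
  ring

lemma fderiv_firstOrderOp_apply (hb : ∀ i, DifferentiableAt ℝ (b i) p)
    (hf : DifferentiableAt ℝ (fderiv ℝ f) p) (w : E) :
    fderiv ℝ (firstOrderOp v b f) p w = ∑ i, (fderiv ℝ (b i) p w * fderiv ℝ f p (v i)
      + b i p * fderiv ℝ (fderiv ℝ f) p w (v i)) := by
  have hterm : ∀ i, DifferentiableAt ℝ (fun q => b i q * fderiv ℝ f q (v i)) p :=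
    fun i => (hb i).mul (hf.clm_apply (differentiableAt_const _))
  unfold firstOrderOp
  rw [fderiv_fun_sum fun i _ => hterm i]
  simp [fderiv_fun_mul (hb _) (hf.clm_apply (differentiableAt_const _)),
    fderiv_clm_apply hf (differentiableAt_const _), smul_eq_mul, add_comm, mul_comm]

theorem firstOrderOp_commutator (ha : ∀ i, DifferentiableAt ℝ (a i) p)
    (hb : ∀ i, DifferentiableAt ℝ (b i) p) (hf : ContDiffAt ℝ 2 f p) :
    firstOrderOp v a (firstOrderOp v b f) p - firstOrderOp v b (firstOrderOp v a f) p
      = ∑ i, (firstOrderOp v a (b i) p - firstOrderOp v b (a i) p) * fderiv ℝ f p (v i) := by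
  have hf' : DifferentiableAt ℝ (fderiv ℝ f) p :=
    (hf.fderiv_right (m := 1) le_rfl).differentiableAt one_ne_zero
  have hsymm := hf.isSymmSndFDerivAt (by simp [minSmoothness_of_isRCLikeNormedField])
  have hsecond : ∑ j, ∑ i, a j p * (b i p * fderiv ℝ (fderiv ℝ f) p (v j) (v i))
      = ∑ j, ∑ i, b j p * (a i p * fderiv ℝ (fderiv ℝ f) p (v j) (v i)) := by
    rw [sum_comm]
    simp only [hsymm.eq (v _) (v _)]
    exact sum_congr rfl fun _ _ => sum_congr rfl fun _ _ => by ring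
  simp only [firstOrderOp, fderiv_firstOrderOp_apply hb hf', fderiv_firstOrderOp_apply ha hf',
    mul_add, sum_add_distrib, mul_sum]
  rw [hsecond, add_sub_add_right_eq_sub]
  simp only [sub_mul, sum_mul, sum_sub_distrib]
  congr 1 <;> rw [sum_comm] <;> simp only [mul_assoc]

end FirstOrderOperator

def lCoeff : Fin 4 → V4 → ℂ :=
  ![fun _ => 1 / 2, fun _ => -I / 2, fun p => Λ₁ p / Δ p, fun p => Λ₂ p / Δ p]

section ClassII

variable {Δ Λ₁ Λ₂ Λ f g h : V4 → ℂ} {p : V4}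

lemma DifferentiableAt.conj_comp (hg : DifferentiableAt ℝ g p) :
    DifferentiableAt ℝ (fun q => conj (g q)) p :=
  hg.star

lemma Lop_eq_firstOrderOp :
    Lop Δ Λ₁ Λ₂ = firstOrderOp (fun j => Pi.single j 1) (lCoeff Δ Λ₁ Λ₂) := by
  funext f p
  simp only [Lop, wz, du1, du2, pd, firstOrderOp, lCoeff, Fin.sum_univ_four, Matrix.cons_val]
  ring

lemma Lbop_eq_firstOrderOp :
    Lbop Δ Λ₁ Λ₂
      = firstOrderOp (fun j => Pi.single j 1) (fun j q => conj (lCoeff Δ Λ₁ Λ₂ j q)) := by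
  funext f p
  simp only [Lbop, wzb, du1, du2, pd, firstOrderOp, lCoeff, Fin.sum_univ_four, Matrix.cons_val,
    map_div₀, map_neg, map_one, map_ofNat, conj_I]
  ring

lemma differentiableAt_lCoeff (hΔ : DifferentiableAt ℝ Δ p) (hΛ₁ : DifferentiableAt ℝ Λ₁ p)
    (hΛ₂ : DifferentiableAt ℝ Λ₂ p) (hΔ0 : Δ p ≠ 0) (j : Fin 4) :
    DifferentiableAt ℝ (lCoeff Δ Λ₁ Λ₂ j) p := by
  fin_cases j
  · exact differentiableAt_const _
  · exact differentiableAt_const _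
  · show DifferentiableAt ℝ (fun q => Λ₁ q / Δ q) p
    simpa only [div_eq_mul_inv] using hΛ₁.fun_mul (hΔ.fun_inv hΔ0)
  · show DifferentiableAt ℝ (fun q => Λ₂ q / Δ q) p
    simpa only [div_eq_mul_inv] using hΛ₂.fun_mul (hΔ.fun_inv hΔ0)

lemma Lop_div (hg : DifferentiableAt ℝ g p) (hh : DifferentiableAt ℝ h p) (h0 : h p ≠ 0) :
    Lop Δ Λ₁ Λ₂ (fun q => g q / h q) p
      = (h p * Lop Δ Λ₁ Λ₂ g p - g p * Lop Δ Λ₁ Λ₂ h p) / h p ^ 2 := by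
  rw [Lop_eq_firstOrderOp]
  exact firstOrderOp_div hg hh h0

lemma Lbop_div (hg : DifferentiableAt ℝ g p) (hh : DifferentiableAt ℝ h p) (h0 : h p ≠ 0) :
    Lbop Δ Λ₁ Λ₂ (fun q => g q / h q) p
      = (h p * Lbop Δ Λ₁ Λ₂ g p - g p * Lbop Δ Λ₁ Λ₂ h p) / h p ^ 2 := by
  rw [Lbop_eq_firstOrderOp]
  exact firstOrderOp_div hg hh h0

lemma I_mul_Lop_conj_div_sub_Lbop_div (hΔ : DifferentiableAt ℝ Δ p)
    (hΛ : DifferentiableAt ℝ Λ p) (hΔ0 : Δ p ≠ 0) :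
    I * (Lop Δ Λ₁ Λ₂ (fun q => conj (Λ q) / conj (Δ q)) p - Lbop Δ Λ₁ Λ₂ (fun q => Λ q / Δ q) p)
      = Ups Δ Λ₁ Λ₂ Λ p / (Δ p ^ 2 * conj (Δ p) ^ 2) := by
  have hΔ0' : conj (Δ p) ≠ 0 := (map_ne_zero _).mpr hΔ0
  rw [Lop_div hΛ.conj_comp hΔ.conj_comp hΔ0', Lbop_div hΛ hΔ hΔ0]
  simp only [Lop, Lbop, Ups]
  field_simp
  ring

lemma Lop_Lbop_commutator (hΔ : DifferentiableAt ℝ Δ p) (hΛ₁ : DifferentiableAt ℝ Λ₁ p)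
    (hΛ₂ : DifferentiableAt ℝ Λ₂ p) (hΔ0 : Δ p ≠ 0) (hf : ContDiffAt ℝ 2 f p) :
    Lop Δ Λ₁ Λ₂ (Lbop Δ Λ₁ Λ₂ f) p - Lbop Δ Λ₁ Λ₂ (Lop Δ Λ₁ Λ₂ f) p
      = (Lop Δ Λ₁ Λ₂ (fun q => conj (Λ₁ q) / conj (Δ q)) p
          - Lbop Δ Λ₁ Λ₂ (fun q => Λ₁ q / Δ q) p) * du1 f p
        + (Lop Δ Λ₁ Λ₂ (fun q => conj (Λ₂ q) / conj (Δ q)) p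
          - Lbop Δ Λ₁ Λ₂ (fun q => Λ₂ q / Δ q) p) * du2 f p := by
  have ha := differentiableAt_lCoeff hΔ hΛ₁ hΛ₂ hΔ0
  rw [Lop_eq_firstOrderOp, Lbop_eq_firstOrderOp,
    firstOrderOp_commutator ha (fun j => (ha j).conj_comp) hf, Fin.sum_univ_four]
  simp [firstOrderOp, lCoeff, du1, du2, pd]

end ClassII

/-- The Lemma giving `T = i[L, L̄]` explicitly for General Class II:
`i·(L(L̄ f) − L̄(L f)) = (Υ₁/(Δ² Δ̄²)) f_{u₁} + (Υ₂/(Δ² Δ̄²)) f_{u₂}`. -/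
theorem class_II_T_explicit (hΔ : ContDiff ℝ 1 Δ) (hΛ₁ : ContDiff ℝ 1 Λ₁)
    (hΛ₂ : ContDiff ℝ 1 Λ₂) (hΔ0 : ∀ p, Δ p ≠ 0) :
    ∀ f : V4 → ℂ, ContDiff ℝ 2 f → ∀ p,
      I * (Lop Δ Λ₁ Λ₂ (Lbop Δ Λ₁ Λ₂ f) p - Lbop Δ Λ₁ Λ₂ (Lop Δ Λ₁ Λ₂ f) p)
        = Ups Δ Λ₁ Λ₂ Λ₁ p / (Δ p ^ 2 * conj (Δ p) ^ 2) * du1 f p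
          + Ups Δ Λ₁ Λ₂ Λ₂ p / (Δ p ^ 2 * conj (Δ p) ^ 2) * du2 f p := by
  intro f hf p
  have hdiff : ∀ g : V4 → ℂ, ContDiff ℝ 1 g → DifferentiableAt ℝ g p :=
    fun g hg => hg.differentiable one_ne_zero p
  rw [Lop_Lbop_commutator (hdiff Δ hΔ) (hdiff Λ₁ hΛ₁) (hdiff Λ₂ hΛ₂) (hΔ0 p) hf.contDiffAt, mul_add,
    ← mul_assoc, ← mul_assoc, I_mul_Lop_conj_div_sub_Lbop_div (hdiff Δ hΔ) (hdiff Λ₁ hΛ₁) (hΔ0 p),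
    I_mul_Lop_conj_div_sub_Lbop_div (hdiff Δ hΔ) (hdiff Λ₂ hΛ₂) (hΔ0 p)]

end
end

section
/- Let Δ, Λ₁, Λ₂ : ℝ⁴ → ℂ be C² with Δ vanishing nowhere. For j = 1, 2 define Υ_j := i·( Δ·Δ·Δ̄·(Λ̄_j)_z + Δ·Δ̄·Λ₁·(Λ̄_j)_{u₁} + Δ·Δ̄·Λ₂·(Λ̄_j)_{u₂} − Δ·Δ·(Δ̄)_z·Λ̄_j − Δ·Λ₁·(Δ̄)_{u₁}·Λ̄_j − Δ·Λ₂·(Δ̄)_{u₂}·Λ̄_j − Δ·Δ̄·Δ̄·(Λ_j)_{z̄} − Δ·Δ̄·Λ̄₁·(Λ_j)_{u₁} − Δ·Δ̄·Λ̄₂·(Λ_j)_{u₂} + Δ̄·Δ̄·Δ_{z̄}·Λ_j + Δ̄·Λ̄₁·Δ_{u₁}·Λ_j + Δ̄·Λ̄₂·Δ_{u₂}·Λ_j ), and define the operator T f := (Υ₁/(Δ² Δ̄²)) f_{u₁} + (Υ₂/(Δ² Δ̄²)) f_{u₂}. Then for every C² function f : ℝ⁴ → ℂ one has L(T f) − T(L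 f) = (Π₁/(Δ⁴ Δ̄³)) f_{u₁} + (Π₂/(Δ⁴ Δ̄³)) f_{u₂}, where for j = 1, 2: Π_j := Δ·Δ·Δ̄·(Υ_j)_z + Δ·Δ̄·Λ₁·(Υ_j)_{u₁} + Δ·Δ̄·Λ₂·(Υ_j)_{u₂} − 2Δ·Δ̄·Δ_z·Υ_j − 2Δ̄·Λ₁·Δ_{u₁}·Υ_j − 2Δ̄·Λ₂·Δ_{u₂}·Υ_j − 2Δ·Δ·(Δ̄)_z·Υ_j − 2Δ·Λ₁·(Δ̄)_{u₁}·Υ_j − 2Δ·Λ₂·(Δ̄)_{u₂}·Υ_j − Δ·Δ̄·Υ₁·(Λ_j)_{u₁} − Δ·Δ̄·Υ₂·(Λ_j)_{u₂} + Δ̄·Υ₁·Δ_{u₁}·Λ_j + Δ̄·Υ₂·Δ_{u₂}·Λ_j. (This is the paper's Lemma giving S = [L, T] explicitly for General Class II.) -/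
noncomputable section
open Complex ComplexConjugate

variable (Δ Λ₁ Λ₂ : V4 → ℂ)

/-- The operator `T f := (Υ₁/(Δ² Δ̄²)) f_{u₁} + (Υ₂/(Δ² Δ̄²)) f_{u₂}`. -/
def Tof (f : V4 → ℂ) : V4 → ℂ := fun p =>
  Ups Δ Λ₁ Λ₂ Λ₁ p / (Δ p ^ 2 * conj (Δ p) ^ 2) * du1 f p
    + Ups Δ Λ₁ Λ₂ Λ₂ p / (Δ p ^ 2 * conj (Δ p) ^ 2) * du2 f p

/-- The numerator `Π` associated to one of the `Λ` coefficients. -/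
def Pii (Λ : V4 → ℂ) : V4 → ℂ := fun p =>
  Δ p * Δ p * conj (Δ p) * wz (Ups Δ Λ₁ Λ₂ Λ) p
    + Δ p * conj (Δ p) * Λ₁ p * du1 (Ups Δ Λ₁ Λ₂ Λ) p
    + Δ p * conj (Δ p) * Λ₂ p * du2 (Ups Δ Λ₁ Λ₂ Λ) p
    - 2 * (Δ p) * conj (Δ p) * wz Δ p * Ups Δ Λ₁ Λ₂ Λ p
    - 2 * conj (Δ p) * Λ₁ p * du1 Δ p * Ups Δ Λ₁ Λ₂ Λ p
    - 2 * conj (Δ p) * Λ₂ p * du2 Δ p * Ups Δ Λ₁ Λ₂ Λ p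
    - 2 * (Δ p) * Δ p * wz (fun q => conj (Δ q)) p * Ups Δ Λ₁ Λ₂ Λ p
    - 2 * (Δ p) * Λ₁ p * du1 (fun q => conj (Δ q)) p * Ups Δ Λ₁ Λ₂ Λ p
    - 2 * (Δ p) * Λ₂ p * du2 (fun q => conj (Δ q)) p * Ups Δ Λ₁ Λ₂ Λ p
    - Δ p * conj (Δ p) * Ups Δ Λ₁ Λ₂ Λ₁ p * du1 Λ p
    - Δ p * conj (Δ p) * Ups Δ Λ₁ Λ₂ Λ₂ p * du2 Λ p
    + conj (Δ p) * Ups Δ Λ₁ Λ₂ Λ₁ p * du1 Δ p * Λ p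
    + conj (Δ p) * Ups Δ Λ₁ Λ₂ Λ₂ p * du2 Δ p * Λ p

/-!
Both operators are first order with complex coefficients, `L = ∑ⱼ cⱼ ∂ⱼ` and `T = ∑ⱼ dⱼ ∂ⱼ`
over the coordinates `x, y, u₁, u₂`, and `[L, T] = ∑ⱼ (L dⱼ − T cⱼ) ∂ⱼ` on `C²` functions: the
second-order terms cancel by the symmetry of second derivatives. The `∂_x, ∂_y`
coefficients of `L` are constant and those of `T` vanish, so only the `∂_{u_j}` coefficients
`L(Υⱼ/(Δ²Δ̄²)) − T(Λⱼ/Δ)` survive, and the quotient rule turns them into `Πⱼ/(Δ⁴Δ̄³)`.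
-/

section PartialDerivatives

variable {f g : V4 → ℂ} {p : V4}

lemma pd_fun_mul (j : Fin 4) (hf : DifferentiableAt ℝ f p) (hg : DifferentiableAt ℝ g p) :
    pd j (fun q => f q * g q) p = pd j f p * g p + f p * pd j g p := by
  simp [pd, fderiv_fun_mul hf hg, add_comm, mul_comm]

lemma pd_fun_sum {ι : Type*} (s : Finset ι) (F : ι → V4 → ℂ) (j : Fin 4)
    (hF : ∀ i ∈ s, DifferentiableAt ℝ (F i) p) :
    pd j (fun q => ∑ i ∈ s, F i q) p = ∑ i ∈ s, pd j (F i) p := by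
  simp [pd, fderiv_fun_sum hF]

lemma pd_fun_pow (j : Fin 4) (n : ℕ) (hf : DifferentiableAt ℝ f p) :
    pd j (fun q => f q ^ n) p = n * f p ^ (n - 1) * pd j f p := by
  simp [pd, fderiv_fun_pow n hf]

lemma pd_fun_inv (j : Fin 4) (hf : DifferentiableAt ℝ f p) (hf0 : f p ≠ 0) :
    pd j (fun q => (f q)⁻¹) p = -(pd j f p / f p ^ 2) := by
  have hinv := (hasFDerivAt_inv' (𝕜 := ℝ) hf0).comp p hf.hasFDerivAt
  simp only [pd, show (fun q => (f q)⁻¹) = Inv.inv ∘ f from rfl, hinv.fderiv]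
  simp only [neg_apply, ContinuousLinearMap.comp_apply,
    ContinuousLinearMap.mulLeftRight_apply]
  ring

lemma pd_const (j : Fin 4) (a : ℂ) : pd j (fun _ => a) p = 0 := by
  simp [pd]

lemma differentiableAt_pd (j : Fin 4) (hf : ContDiffAt ℝ 2 f p) :
    DifferentiableAt ℝ (pd j f) p :=
  ((hf.fderiv_right (m := 1) le_rfl).differentiableAt one_ne_zero).clm_apply
    (differentiableAt_const _)

lemma pd_comm (i j : Fin 4) (hf : ContDiffAt ℝ 2 f p) :
    pd i (pd j f) p = pd j (pd i f) p := by
  have hd : DifferentiableAt ℝ (fderiv ℝ f) p :=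
    (hf.fderiv_right (m := 1) le_rfl).differentiableAt one_ne_zero
  have key : ∀ v w : V4, fderiv ℝ (fun q => fderiv ℝ f q w) p v = fderiv ℝ (fderiv ℝ f) p v w :=
    fun v w => by simp [fderiv_clm_apply hd (differentiableAt_const w)]
  change fderiv ℝ (fun q => fderiv ℝ f q (Pi.single j 1)) p (Pi.single i 1)
    = fderiv ℝ (fun q => fderiv ℝ f q (Pi.single i 1)) p (Pi.single j 1)
  rw [key, key]
  exact hf.isSymmSndFDerivAt (by simp) _ _

end PartialDerivatives

section VecDeriv

variable {f g : V4 → ℂ} {p : V4}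

def vecDeriv (c : Fin 4 → V4 → ℂ) (f : V4 → ℂ) : V4 → ℂ := fun p => ∑ j, c j p * pd j f p

lemma vecDeriv_eq_of_pd_eq {h : V4 → ℂ} (a b : ℂ)
    (hpd : ∀ j, pd j h p = a * pd j f p + b * pd j g p) (c : Fin 4 → V4 → ℂ) :
    vecDeriv c h p = a * vecDeriv c f p + b * vecDeriv c g p := by
  simp only [vecDeriv, hpd, Finset.mul_sum, ← Finset.sum_add_distrib]
  exact Finset.sum_congr rfl fun _ _ => by ring

lemma vecDeriv_fun_mul (c : Fin 4 → V4 → ℂ) (hf : DifferentiableAt ℝ f p)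
    (hg : DifferentiableAt ℝ g p) :
    vecDeriv c (fun q => f q * g q) p = vecDeriv c f p * g p + f p * vecDeriv c g p := by
  rw [vecDeriv_eq_of_pd_eq (f := f) (g := g) (g p) (f p)
    (fun j => by rw [pd_fun_mul j hf hg]; ring)]
  ring

lemma vecDeriv_fun_div (c : Fin 4 → V4 → ℂ) (hf : DifferentiableAt ℝ f p)
    (hg : DifferentiableAt ℝ g p) (hg0 : g p ≠ 0) :
    vecDeriv c (fun q => f q / g q) p
      = (vecDeriv c f p * g p - f p * vecDeriv c g p) / g p ^ 2 := by
  have hpd j :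
      pd j (fun q => f q / g q) p = (g p)⁻¹ * pd j f p + (-f p / g p ^ 2) * pd j g p := by
    simp only [div_eq_mul_inv]
    rw [pd_fun_mul (g := fun q => (g q)⁻¹) j hf (hg.inv hg0), pd_fun_inv j hg hg0]
    ring
  rw [vecDeriv_eq_of_pd_eq _ _ hpd]
  field_simp
  ring

lemma vecDeriv_fun_pow (c : Fin 4 → V4 → ℂ) (n : ℕ) (hf : DifferentiableAt ℝ f p) :
    vecDeriv c (fun q => f q ^ n) p = n * f p ^ (n - 1) * vecDeriv c f p := by
  rw [vecDeriv_eq_of_pd_eq (f := f) (g := f) (n * f p ^ (n - 1)) 0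
    (fun j => by rw [pd_fun_pow j n hf]; ring)]
  ring

lemma vecDeriv_const (c : Fin 4 → V4 → ℂ) (a : ℂ) : vecDeriv c (fun _ => a) p = 0 := by
  simp [vecDeriv, pd_const]

lemma vecDeriv_vecDeriv (c d : Fin 4 → V4 → ℂ) (hd : ∀ j, DifferentiableAt ℝ (d j) p)
    (hf : ContDiffAt ℝ 2 f p) :
    vecDeriv c (vecDeriv d f) p
      = ∑ j, (vecDeriv c (d j) p * pd j f p + d j p * vecDeriv c (pd j f) p) := by
  have hterm j : DifferentiableAt ℝ (fun q => d j q * pd j f q) p :=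
    (hd j).mul (differentiableAt_pd j hf)
  rw [show vecDeriv d f = fun q => ∑ j, d j q * pd j f q from rfl]
  simp only [vecDeriv, pd_fun_sum _ _ _ fun j _ => hterm j,
    pd_fun_mul _ (hd _) (differentiableAt_pd _ hf), Finset.mul_sum, Finset.sum_mul,
    ← Finset.sum_add_distrib]
  rw [Finset.sum_comm]
  exact Finset.sum_congr rfl fun _ _ => Finset.sum_congr rfl fun _ _ => by ring

lemma vecDeriv_comm_sub (c d : Fin 4 → V4 → ℂ) (hc : ∀ j, DifferentiableAt ℝ (c j) p)
    (hd : ∀ j, DifferentiableAt ℝ (d j) p) (hf : ContDiffAt ℝ 2 f p) :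
    vecDeriv c (vecDeriv d f) p - vecDeriv d (vecDeriv c f) p
      = vecDeriv (fun j q => vecDeriv c (d j) q - vecDeriv d (c j) q) f p := by
  have second_order :
      ∑ j, d j p * vecDeriv c (pd j f) p = ∑ j, c j p * vecDeriv d (pd j f) p := by
    simp only [vecDeriv, Finset.mul_sum]
    rw [Finset.sum_comm]
    exact Finset.sum_congr rfl fun i _ => Finset.sum_congr rfl fun j _ => by
      rw [pd_comm i j hf]; ring
  rw [vecDeriv_vecDeriv c d hd hf, vecDeriv_vecDeriv d c hc hf, Finset.sum_add_distrib,
    Finset.sum_add_distrib, second_order]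
  simp only [vecDeriv, sub_mul, Finset.sum_sub_distrib]
  ring

end VecDeriv

section Regularity

variable {f : V4 → ℂ}

@[fun_prop]
lemma contDiff_conj {n : WithTop ℕ∞} (hf : ContDiff ℝ n f) :
    ContDiff ℝ n (fun q => conj (f q)) :=
  conjCLE.contDiff.comp hf

@[fun_prop]
lemma differentiable_pd (j : Fin 4) (hf : ContDiff ℝ 2 f) : Differentiable ℝ (pd j f) :=
  fun _ => differentiableAt_pd j hf.contDiffAt

@[fun_prop]
lemma differentiable_wz (hf : ContDiff ℝ 2 f) : Differentiable ℝ (wz f) := by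
  unfold wz; fun_prop

@[fun_prop]
lemma differentiable_wzb (hf : ContDiff ℝ 2 f) : Differentiable ℝ (wzb f) := by
  unfold wzb; fun_prop

lemma differentiable_Ups {Λ : V4 → ℂ} (hΔ : ContDiff ℝ 2 Δ) (hΛ₁ : ContDiff ℝ 2 Λ₁)
    (hΛ₂ : ContDiff ℝ 2 Λ₂) (hΛ : ContDiff ℝ 2 Λ) : Differentiable ℝ (Ups Δ Λ₁ Λ₂ Λ) := by
  have := hΔ.differentiable two_ne_zero
  have := hΛ₁.differentiable two_ne_zero
  have := hΛ₂.differentiable two_ne_zero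
  have := hΛ.differentiable two_ne_zero
  unfold Ups du1 du2
  fun_prop

end Regularity

def lopCoeff : Fin 4 → V4 → ℂ :=
  ![fun _ => 1 / 2, fun _ => -I / 2, fun q => Λ₁ q / Δ q, fun q => Λ₂ q / Δ q]

def tofCoeff : Fin 4 → V4 → ℂ :=
  ![fun _ => 0, fun _ => 0, fun q => Ups Δ Λ₁ Λ₂ Λ₁ q / (Δ q ^ 2 * conj (Δ q) ^ 2),
    fun q => Ups Δ Λ₁ Λ₂ Λ₂ q / (Δ q ^ 2 * conj (Δ q) ^ 2)]

lemma Lop_eq_vecDeriv : Lop Δ Λ₁ Λ₂ = vecDeriv (lopCoeff Δ Λ₁ Λ₂) := by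
  ext f p
  simp only [Lop, wz, du1, du2, vecDeriv, lopCoeff, Fin.sum_univ_four, Matrix.cons_val]
  ring

lemma Tof_eq_vecDeriv : Tof Δ Λ₁ Λ₂ = vecDeriv (tofCoeff Δ Λ₁ Λ₂) := by
  ext f p
  simp [Tof, vecDeriv, tofCoeff, du1, du2, Fin.sum_univ_four]

section Coefficients

variable {Δ Λ₁ Λ₂} {p : V4}

lemma differentiableAt_lopCoeff (hΔ : DifferentiableAt ℝ Δ p) (hΛ₁ : DifferentiableAt ℝ Λ₁ p)
    (hΛ₂ : DifferentiableAt ℝ Λ₂ p) (hΔ0 : Δ p ≠ 0) (j : Fin 4) :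
    DifferentiableAt ℝ (lopCoeff Δ Λ₁ Λ₂ j) p := by
  fin_cases j <;> dsimp [lopCoeff] <;> simp only [div_eq_mul_inv] <;>
    fun_prop (disch := exact hΔ0)

lemma differentiableAt_tofCoeff (hΔ : ContDiff ℝ 2 Δ) (hΛ₁ : ContDiff ℝ 2 Λ₁)
    (hΛ₂ : ContDiff ℝ 2 Λ₂) (hΔ0 : Δ p ≠ 0) (j : Fin 4) :
    DifferentiableAt ℝ (tofCoeff Δ Λ₁ Λ₂ j) p := by
  have := hΔ.differentiable two_ne_zero
  have := differentiable_Ups Δ Λ₁ Λ₂ hΔ hΛ₁ hΛ₂ hΛ₁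
  have := differentiable_Ups Δ Λ₁ Λ₂ hΔ hΛ₁ hΛ₂ hΛ₂
  have hD0 : Δ p ^ 2 * conj (Δ p) ^ 2 ≠ 0 := by simp [hΔ0]
  fin_cases j <;> dsimp [tofCoeff] <;> simp only [div_eq_mul_inv, differentiableAt_const] <;>
    fun_prop (disch := exact hD0)

lemma vecDeriv_sq_mul_conj_sq (c : Fin 4 → V4 → ℂ) (hΔ : DifferentiableAt ℝ Δ p) :
    vecDeriv c (fun q => Δ q ^ 2 * conj (Δ q) ^ 2) p
      = 2 * Δ p * conj (Δ p) ^ 2 * vecDeriv c Δ p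
        + 2 * Δ p ^ 2 * conj (Δ p) * vecDeriv c (fun q => conj (Δ q)) p := by
  have hΔc : DifferentiableAt ℝ (fun q => conj (Δ q)) p :=
    (conjCLE.differentiableAt).comp p hΔ
  rw [vecDeriv_fun_mul c (hΔ.fun_pow 2) (hΔc.fun_pow 2), vecDeriv_fun_pow c 2 hΔ,
    vecDeriv_fun_pow c 2 hΔc]
  push_cast
  ring

lemma Lop_div_sub_Tof_div {Λ : V4 → ℂ} (hΔ : ContDiff ℝ 2 Δ) (hΛ₁ : ContDiff ℝ 2 Λ₁)
    (hΛ₂ : ContDiff ℝ 2 Λ₂) (hΛ : ContDiff ℝ 2 Λ) (hΔ0 : Δ p ≠ 0) :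
    Lop Δ Λ₁ Λ₂ (fun q => Ups Δ Λ₁ Λ₂ Λ q / (Δ q ^ 2 * conj (Δ q) ^ 2)) p
        - Tof Δ Λ₁ Λ₂ (fun q => Λ q / Δ q) p
      = Pii Δ Λ₁ Λ₂ Λ p / (Δ p ^ 4 * conj (Δ p) ^ 3) := by
  have hΔd := hΔ.differentiable two_ne_zero p
  have hD0 : Δ p ^ 2 * conj (Δ p) ^ 2 ≠ 0 := by simp [hΔ0]
  rw [Lop_eq_vecDeriv, Tof_eq_vecDeriv,
    vecDeriv_fun_div _ (differentiable_Ups Δ Λ₁ Λ₂ hΔ hΛ₁ hΛ₂ hΛ p) (by fun_prop) hD0,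
    vecDeriv_fun_div _ (hΛ.differentiable two_ne_zero p) hΔd hΔ0,
    vecDeriv_sq_mul_conj_sq _ hΔd, ← Lop_eq_vecDeriv, ← Tof_eq_vecDeriv]
  have hc0 : conj (Δ p) ≠ 0 := by simpa using hΔ0
  simp only [Pii, Lop, Tof, wz, du1, du2]
  field_simp
  ring

end Coefficients

/-- The Lemma giving `S = [L, T]` explicitly for General Class II:
`L(T f) − T(L f) = (Π₁/(Δ⁴ Δ̄³)) f_{u₁} + (Π₂/(Δ⁴ Δ̄³)) f_{u₂}`. -/
theorem class_II_S_explicit (hΔ : ContDiff ℝ 2 Δ) (hΛ₁ : ContDiff ℝ 2 Λ₁)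
    (hΛ₂ : ContDiff ℝ 2 Λ₂) (hΔ0 : ∀ p, Δ p ≠ 0) :
    ∀ f : V4 → ℂ, ContDiff ℝ 2 f → ∀ p,
      Lop Δ Λ₁ Λ₂ (Tof Δ Λ₁ Λ₂ f) p - Tof Δ Λ₁ Λ₂ (Lop Δ Λ₁ Λ₂ f) p
        = Pii Δ Λ₁ Λ₂ Λ₁ p / (Δ p ^ 4 * conj (Δ p) ^ 3) * du1 f p
          + Pii Δ Λ₁ Λ₂ Λ₂ p / (Δ p ^ 4 * conj (Δ p) ^ 3) * du2 f p := by
  intro f hf p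
  have hL := differentiableAt_lopCoeff (hΔ.differentiable two_ne_zero p)
    (hΛ₁.differentiable two_ne_zero p) (hΛ₂.differentiable two_ne_zero p) (hΔ0 p)
  have hT := differentiableAt_tofCoeff hΔ hΛ₁ hΛ₂ (hΔ0 p)
  have h₁ : vecDeriv (lopCoeff Δ Λ₁ Λ₂) (tofCoeff Δ Λ₁ Λ₂ 2) p
      - vecDeriv (tofCoeff Δ Λ₁ Λ₂) (lopCoeff Δ Λ₁ Λ₂ 2) p
      = Pii Δ Λ₁ Λ₂ Λ₁ p / (Δ p ^ 4 * conj (Δ p) ^ 3) := by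
    rw [← Lop_eq_vecDeriv, ← Tof_eq_vecDeriv]
    exact Lop_div_sub_Tof_div hΔ hΛ₁ hΛ₂ hΛ₁ (hΔ0 p)
  have h₂ : vecDeriv (lopCoeff Δ Λ₁ Λ₂) (tofCoeff Δ Λ₁ Λ₂ 3) p
      - vecDeriv (tofCoeff Δ Λ₁ Λ₂) (lopCoeff Δ Λ₁ Λ₂ 3) p
      = Pii Δ Λ₁ Λ₂ Λ₂ p / (Δ p ^ 4 * conj (Δ p) ^ 3) := by
    rw [← Lop_eq_vecDeriv, ← Tof_eq_vecDeriv]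
    exact Lop_div_sub_Tof_div hΔ hΛ₁ hΛ₂ hΛ₂ (hΔ0 p)
  rw [Lop_eq_vecDeriv, Tof_eq_vecDeriv, vecDeriv_comm_sub _ _ hL hT hf.contDiffAt, vecDeriv,
    Fin.sum_univ_four, h₁, h₂]
  simp [lopCoeff, tofCoeff, vecDeriv_const, du1, du2]

end
end
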